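/- Let d ≥ 2 be an integer, c ∈ [1/d, 1) and ε, t > 0 real numbers, and let (u_1,…,u_{d+1}) be unit vectors in ℂ^d with |⟨u_i,u_j⟩| = c for all i ≠ j. Define density matrices ρ_i = (1/(d+t))(I_d + t|u_i⟩⟨u_i|) for i = 1,…,d+1. If D = (e^ε − 1)² + 4(1−c²)e^ε and 0 < t ≤ t_max := 2(e^ε − 1)/(√D + 1 − e^ε), then (ρ_1,…,ρ_{d+1}) is CQ ε-DP. -/

import Mathlib

open scoped BigOperators Classical ComplexOrder
open Matrix

noncomputable section

/-- `p` is a probability vector in `ℝ^d`. -/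
def IsProbVec {d : ℕ} (p : Fin d → ℝ) : Prop :=
  (∀ k, 0 ≤ p k) ∧ ∑ k, p k = 1

/-- `(p i)_{i=1}^n` is an `ε`-differentially private `n`-tuple of probability vectors. -/
def IsDP {n d : ℕ} (ε : ℝ) (p : Fin n → Fin d → ℝ) : Prop :=
  (∀ i, IsProbVec (p i)) ∧ ∀ i j k, p i k ≤ Real.exp ε * p j k

/-- Classical RLD Fisher information `J_θ(p,q)`. -/
def Jc {d : ℕ} (θ : ℝ) (p q : Fin d → ℝ) : ℝ :=
  ∑ k, (q k - p k) ^ 2 / ((1 - θ) * p k + θ * q k)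

/-- `ρ` is a density matrix on `ℂ^d`. -/
def IsDensityMatrix {d : ℕ} (ρ : Matrix (Fin d) (Fin d) ℂ) : Prop :=
  ρ.PosSemidef ∧ ρ.trace = 1

/-- `(ρ i)_{i=1}^n` is a classical-quantum `ε`-differentially private `n`-tuple. -/
def IsCQDP {n d : ℕ} (ε : ℝ) (ρ : Fin n → Matrix (Fin d) (Fin d) ℂ) : Prop :=
  (∀ i, IsDensityMatrix (ρ i)) ∧ ∀ i j, (Real.exp ε • ρ j - ρ i).PosSemidef

/-- `(ρ i)_{i=1}^n` lies in the essentially classical set `EC_n(ε)`. -/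
def InEC {n d : ℕ} (ε : ℝ) (ρ : Fin n → Matrix (Fin d) (Fin d) ℂ) : Prop :=
  ∃ (m : ℕ) (p : Fin n → Fin m → ℝ) (σ : Fin m → Matrix (Fin d) (Fin d) ℂ),
    IsDP ε p ∧ (∀ k, IsDensityMatrix (σ k)) ∧ ∀ i, ρ i = ∑ k, (p i k : ℂ) • σ k

/-- Quantum RLD Fisher information `J_θ(ρ,σ) = Tr((σ−ρ)²((1−θ)ρ+θσ)⁻¹)`. -/
def Jq {d : ℕ} (θ : ℝ) (ρ σ : Matrix (Fin d) (Fin d) ℂ) : ℝ :=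
  (((σ - ρ) ^ 2 * ((1 - θ : ℂ) • ρ + (θ : ℂ) • σ)⁻¹).trace).re

/-- The function `f_θ(α,β) = (α−β)²/((1−θ)α+θβ)`. -/
def fTheta (θ α β : ℝ) : ℝ := (α - β) ^ 2 / ((1 - θ) * α + θ * β)

/-- `min_{i≠j} J_θ(p_i,p_j)` (classical). -/
def minPairsC {n d : ℕ} (θ : ℝ) (p : Fin n → Fin d → ℝ) : ℝ :=
  ⨅ ij : {q : Fin n × Fin n // q.1 ≠ q.2}, Jc θ (p ij.val.1) (p ij.val.2)

/-- `min_{i≠j} J_θ(ρ_i,ρ_j)` (quantum). -/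
def minPairsQ {n d : ℕ} (θ : ℝ) (ρ : Fin n → Matrix (Fin d) (Fin d) ℂ) : ℝ :=
  ⨅ ij : {q : Fin n × Fin n // q.1 ≠ q.2}, Jq θ (ρ ij.val.1) (ρ ij.val.2)

/-- `avg_{i≠j} J_θ(p_i,p_j)` (classical): arithmetic mean over ordered pairs `i ≠ j`. -/
def avgPairsC {n d : ℕ} (θ : ℝ) (p : Fin n → Fin d → ℝ) : ℝ :=
  (∑ i, ∑ j, if i ≠ j then Jc θ (p i) (p j) else 0) / ((n : ℝ) * ((n : ℝ) - 1))

/-- `avg_{i≠j} J_θ(ρ_i,ρ_j)` (quantum): arithmetic mean over ordered pairs `i ≠ j`. -/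
def avgPairsQ {n d : ℕ} (θ : ℝ) (ρ : Fin n → Matrix (Fin d) (Fin d) ℂ) : ℝ :=
  (∑ i, ∑ j, if i ≠ j then Jq θ (ρ i) (ρ j) else 0) / ((n : ℝ) * ((n : ℝ) - 1))

/-- `M_n^C(ε;J_θ)`: supremum of `min_{i≠j} J_θ(p_i,p_j)` over `ε`-DP `n`-tuples with
positive entries, over all dimensions `d`. -/
def MC (n : ℕ) (ε θ : ℝ) : ℝ :=
  sSup {x : ℝ | ∃ (d : ℕ) (p : Fin n → Fin d → ℝ),
    IsDP ε p ∧ (∀ i k, 0 < p i k) ∧ x = minPairsC θ p}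

/-- `M_n^EC(ε;J_θ)`: supremum of `min_{i≠j} J_θ(ρ_i,ρ_j)` over full-rank `n`-tuples in
`EC_n(ε)`, over all dimensions `d`. -/
def MEC (n : ℕ) (ε θ : ℝ) : ℝ :=
  sSup {x : ℝ | ∃ (d : ℕ) (ρ : Fin n → Matrix (Fin d) (Fin d) ℂ),
    InEC ε ρ ∧ (∀ i, (ρ i).PosDef) ∧ x = minPairsQ θ ρ}

/-- `M_n^CQ(ε;J_θ)`: supremum of `min_{i≠j} J_θ(ρ_i,ρ_j)` over full-rank CQ `ε`-DP
`n`-tuples, over all dimensions `d`. -/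
def MCQ (n : ℕ) (ε θ : ℝ) : ℝ :=
  sSup {x : ℝ | ∃ (d : ℕ) (ρ : Fin n → Matrix (Fin d) (Fin d) ℂ),
    IsCQDP ε ρ ∧ (∀ i, (ρ i).PosDef) ∧ x = minPairsQ θ ρ}

/-- `M_2^C(ε;J_θ)` as the supremum of `J_θ(p,q)` over `ε`-DP pairs with positive entries. -/
def M2C (ε θ : ℝ) : ℝ :=
  sSup {x : ℝ | ∃ (d : ℕ) (p q : Fin d → ℝ),
    IsProbVec p ∧ IsProbVec q ∧ (∀ k, 0 < p k) ∧ (∀ k, 0 < q k) ∧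
    (∀ k, p k ≤ Real.exp ε * q k ∧ q k ≤ Real.exp ε * p k) ∧
    x = Jc θ p q}

/-- `max_{1 ≤ k ≤ n/2} k(n−k)/(k e^ε + n − k)`. -/
def maxK (n : ℕ) (ε : ℝ) : ℝ :=
  sSup {x : ℝ | ∃ k : ℕ, 1 ≤ k ∧ 2 * k ≤ n ∧
    x = ((k : ℝ) * ((n : ℝ) - (k : ℝ))) / ((k : ℝ) * Real.exp ε + (n : ℝ) - (k : ℝ))}

/-!
Write `ρ_i = (d + t)⁻¹ (I + t P_i)` with `P_i` the projection onto `u_i`. Fix `j` and decompose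
`u_i` and a test vector `x` along `u_j` and its orthogonal complement: the orthogonal part of `u_i`
has norm `√(1 - c²)`, so `|⟨u_i, x⟩| ≤ c α + √(1 - c²) β` with `α = |⟨u_j, x⟩|` and `β² = ‖x‖² - α²`.
Hence `⟨x, ρ_i x⟩ ≤ e^ε ⟨x, ρ_j x⟩` follows from the nonnegativity of a quadratic form in `(α, β)`,
whose determinant `(e^ε - 1)² (1 + t) - (1 - c²) e^ε t²` is nonnegative exactly when `t ≤ t_max`.
-/

open scoped InnerProductSpace
open WithLp (toLp)

-- `t ≤ tmax` says that `t` lies below the positive root of `(1 - c²) E t² = (E - 1)² (1 + t)`.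
lemma one_sub_sq_mul_mul_sq_le_of_le {E c t : ℝ} (hE : 1 < E) (hc : c ^ 2 < 1) (ht : 0 ≤ t)
    (htmax : t ≤ 2 * (E - 1) / (√((E - 1) ^ 2 + 4 * (1 - c ^ 2) * E) + 1 - E)) :
    (1 - c ^ 2) * E * t ^ 2 ≤ (E - 1) ^ 2 * (1 + t) := by
  set D := (E - 1) ^ 2 + 4 * (1 - c ^ 2) * E
  have hD : √D ^ 2 = D := Real.sq_sqrt (by positivity)
  have hsqrt : E - 1 < √D := by nlinarith [Real.sqrt_nonneg D]
  have hts : t * √D ≤ (E - 1) * (2 + t) := by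
    rw [le_div_iff₀ (by linarith)] at htmax
    linarith
  nlinarith [mul_self_le_mul_self (mul_nonneg ht (Real.sqrt_nonneg D)) hts]

lemma mul_add_sq_le_of_one_sub_sq_mul_mul_sq_le {E c s t α β : ℝ} (hE : 1 < E) (ht : 0 ≤ t)
    (hs : s ^ 2 = 1 - c ^ 2) (hdet : (1 - c ^ 2) * E * t ^ 2 ≤ (E - 1) ^ 2 * (1 + t)) :
    t * (c * α + s * β) ^ 2 ≤ (E - 1) * (α ^ 2 + β ^ 2) + t * E * α ^ 2 := by
  have hA : 0 < E - 1 + t * (E - c ^ 2) := by nlinarith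
  -- complete the square after scaling by the positive leading coefficient
  have hsos : (E - 1 + t * (E - c ^ 2)) *
        ((E - 1) * (α ^ 2 + β ^ 2) + t * E * α ^ 2 - t * (c * α + s * β) ^ 2)
      = ((E - 1 + t * (E - c ^ 2)) * α - t * c * s * β) ^ 2
        + ((E - 1) ^ 2 * (1 + t) - (1 - c ^ 2) * E * t ^ 2) * β ^ 2 := by
    linear_combination (-(E - 1 + t * (E - c ^ 2)) * t - t ^ 2 * c ^ 2) * β ^ 2 * hs
  have hrhs : 0 ≤ ((E - 1 + t * (E - c ^ 2)) * α - t * c * s * β) ^ 2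
      + ((E - 1) ^ 2 * (1 + t) - (1 - c ^ 2) * E * t ^ 2) * β ^ 2 := by
    have := sub_nonneg.2 hdet
    positivity
  nlinarith

section InnerProductSpace

variable {F : Type*} [NormedAddCommGroup F] [InnerProductSpace ℂ F] {a : F}

lemma norm_sub_inner_smul_sq (ha : ‖a‖ = 1) (x : F) :
    ‖x - ⟪a, x⟫_ℂ • a‖ ^ 2 = ‖x‖ ^ 2 - ‖⟪a, x⟫_ℂ‖ ^ 2 := by
  rw [norm_sub_sq (𝕜 := ℂ), inner_smul_right, ← inner_conj_symm x a, Complex.mul_conj',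
    norm_smul, ha, RCLike.re_to_complex, ← Complex.ofReal_pow, Complex.ofReal_re]
  ring

lemma inner_eq_conj_mul_add_inner_sub (ha : ‖a‖ = 1) (b x : F) :
    ⟪b, x⟫_ℂ = starRingEnd ℂ ⟪a, b⟫_ℂ * ⟪a, x⟫_ℂ
      + ⟪b - ⟪a, b⟫_ℂ • a, x - ⟪a, x⟫_ℂ • a⟫_ℂ := by
  have haa : ⟪a, a⟫_ℂ = 1 := by rw [inner_self_eq_norm_sq_to_K, ha]; norm_num
  simp only [inner_sub_left, inner_sub_right, inner_smul_left, inner_smul_right, haa,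
    inner_conj_symm]
  ring

lemma norm_inner_le_of_norm_eq_one (ha : ‖a‖ = 1) (b x : F) :
    ‖⟪b, x⟫_ℂ‖ ≤ ‖⟪a, b⟫_ℂ‖ * ‖⟪a, x⟫_ℂ‖ + ‖b - ⟪a, b⟫_ℂ • a‖ * ‖x - ⟪a, x⟫_ℂ • a‖ := by
  rw [inner_eq_conj_mul_add_inner_sub ha b x]
  refine (norm_add_le _ _).trans (add_le_add ?_ (norm_inner_le_norm _ _))
  rw [norm_mul, Complex.norm_conj]

lemma norm_sq_add_mul_norm_inner_sq_le {b : F} {E t : ℝ} (ha : ‖a‖ = 1) (hb : ‖b‖ = 1)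
    (hE : 1 < E) (ht : 0 ≤ t)
    (hdet : (1 - ‖⟪a, b⟫_ℂ‖ ^ 2) * E * t ^ 2 ≤ (E - 1) ^ 2 * (1 + t)) (x : F) :
    ‖x‖ ^ 2 + t * ‖⟪b, x⟫_ℂ‖ ^ 2 ≤ E * (‖x‖ ^ 2 + t * ‖⟪a, x⟫_ℂ‖ ^ 2) := by
  have hb' : ‖b - ⟪a, b⟫_ℂ • a‖ ^ 2 = 1 - ‖⟪a, b⟫_ℂ‖ ^ 2 := by
    rw [norm_sub_inner_smul_sq ha, hb, one_pow]
  have hx' := norm_sub_inner_smul_sq ha x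
  have hquad := mul_add_sq_le_of_one_sub_sq_mul_mul_sq_le (α := ‖⟪a, x⟫_ℂ‖)
    (β := ‖x - ⟪a, x⟫_ℂ • a‖) hE ht hb' hdet
  have hbx := pow_le_pow_left₀ (norm_nonneg _) (norm_inner_le_of_norm_eq_one ha b x) 2
  nlinarith

end InnerProductSpace

section Matrix

variable {n : Type*} [Fintype n]

lemma star_dotProduct_vecMulVec_mulVec (v x : n → ℂ) :
    star x ⬝ᵥ (vecMulVec v (star v) *ᵥ x) = ((‖⟪toLp 2 v, toLp 2 x⟫_ℂ‖ ^ 2 : ℝ) : ℂ) := by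
  rw [EuclideanSpace.inner_toLp_toLp, vecMulVec_mulVec, op_smul_eq_smul, dotProduct_smul,
    smul_eq_mul, dotProduct_comm x, star_dotProduct v x, Complex.star_def, Complex.ofReal_pow,
    ← Complex.conj_mul', Complex.conj_conj, mul_comm]

lemma star_dotProduct_one_add_smul_vecMulVec_mulVec [DecidableEq n] (t : ℝ) (v x : n → ℂ) :
    star x ⬝ᵥ ((1 + t • vecMulVec v (star v)) *ᵥ x)
      = ((‖toLp 2 x‖ ^ 2 + t * ‖⟪toLp 2 v, toLp 2 x⟫_ℂ‖ ^ 2 : ℝ) : ℂ) := by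
  have hx : star x ⬝ᵥ x = ((‖toLp 2 x‖ ^ 2 : ℝ) : ℂ) := by
    rw [dotProduct_comm, ← EuclideanSpace.inner_toLp_toLp, inner_self_eq_norm_sq_to_K]
    push_cast; rfl
  rw [add_mulVec, one_mulVec, smul_mulVec, dotProduct_add, dotProduct_smul, hx,
    star_dotProduct_vecMulVec_mulVec, Complex.real_smul]
  push_cast; ring

lemma posSemidef_smul_sub_of_forall_le {A B : Matrix n n ℂ} (hA : A.IsHermitian)
    (hB : B.IsHermitian) {E : ℝ} (h : ∀ x, star x ⬝ᵥ (A *ᵥ x) ≤ E * (star x ⬝ᵥ (B *ᵥ x))) :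
    (E • B - A).PosSemidef :=
  .of_dotProduct_mulVec_nonneg ((hB.smul (IsSelfAdjoint.all E)).sub hA) fun x => by
    rw [sub_mulVec, dotProduct_sub, smul_mulVec, dotProduct_smul, Complex.real_smul, sub_nonneg]
    exact h x

variable [DecidableEq n]

lemma posSemidef_one_add_smul_vecMulVec {t : ℝ} (ht : 0 ≤ t) (v : n → ℂ) :
    (1 + t • vecMulVec v (star v)).PosSemidef :=
  PosSemidef.one.add ((posSemidef_vecMulVec_self_star v).smul ht)

lemma trace_one_add_smul_vecMulVec {v : n → ℂ} (hv : ‖toLp 2 v‖ = 1) (t : ℝ) :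
    (1 + t • vecMulVec v (star v)).trace = Fintype.card n + t := by
  rw [trace_add, trace_one, trace_smul, trace_vecMulVec, ← EuclideanSpace.inner_toLp_toLp,
    inner_self_eq_norm_sq_to_K, hv]
  simp

lemma posSemidef_smul_one_add_smul_vecMulVec_sub {v w : n → ℂ} {E t : ℝ}
    (hv : ‖toLp 2 v‖ = 1) (hw : ‖toLp 2 w‖ = 1) (hE : 1 < E) (ht : 0 ≤ t)
    (hdet : (1 - ‖⟪toLp 2 w, toLp 2 v⟫_ℂ‖ ^ 2) * E * t ^ 2 ≤ (E - 1) ^ 2 * (1 + t)) :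
    (E • (1 + t • vecMulVec w (star w)) - (1 + t • vecMulVec v (star v))).PosSemidef := by
  refine posSemidef_smul_sub_of_forall_le (posSemidef_one_add_smul_vecMulVec ht v).isHermitian
    (posSemidef_one_add_smul_vecMulVec ht w).isHermitian fun x => ?_
  rw [star_dotProduct_one_add_smul_vecMulVec_mulVec, star_dotProduct_one_add_smul_vecMulVec_mulVec]
  exact_mod_cast norm_sq_add_mul_norm_inner_sq_le hw hv hE ht hdet (toLp 2 x)

end Matrix

theorem statement15_general (d : ℕ) (c ε t : ℝ)
    (hc1 : c < 1) (hε : 0 < ε) (ht : 0 < t)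
    (u : Fin (d + 1) → Fin d → ℂ)
    (hu : ∀ i, ∑ k, ‖u i k‖ ^ 2 = 1)
    (huv : ∀ i j, i ≠ j → ‖∑ k, starRingEnd ℂ (u i k) * u j k‖ = c)
    (D : ℝ) (hD : D = (Real.exp ε - 1) ^ 2 + 4 * (1 - c ^ 2) * Real.exp ε)
    (htmax : t ≤ 2 * (Real.exp ε - 1) / (Real.sqrt D + 1 - Real.exp ε)) :
    IsCQDP ε (fun i => ((d : ℝ) + t)⁻¹ •
      ((1 : Matrix (Fin d) (Fin d) ℂ) +
        t • Matrix.of fun a b => u i a * starRingEnd ℂ (u i b))) := by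
  have hE : 1 < Real.exp ε := Real.one_lt_exp_iff.2 hε
  have hu' : ∀ i, ‖toLp 2 (u i)‖ = 1 := fun i => by simp [EuclideanSpace.norm_eq, hu]
  have hdet : ∀ i j, (1 - ‖⟪toLp 2 (u j), toLp 2 (u i)⟫_ℂ‖ ^ 2) * Real.exp ε * t ^ 2
      ≤ (Real.exp ε - 1) ^ 2 * (1 + t) := by
    intro i j
    rcases eq_or_ne j i with rfl | hji
    · rw [inner_self_eq_norm_sq_to_K, hu']
      norm_num
      positivity
    · have hc : ‖⟪toLp 2 (u j), toLp 2 (u i)⟫_ℂ‖ = c := by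
        rw [EuclideanSpace.inner_toLp_toLp, dotProduct_comm, ← huv j i hji]
        rfl
      rw [hc]
      refine one_sub_sq_mul_mul_sq_le_of_le hE ?_ ht.le (hD ▸ htmax)
      nlinarith [hc ▸ norm_nonneg _]
  have hρ : ∀ i, Matrix.of (fun a b => u i a * starRingEnd ℂ (u i b))
      = vecMulVec (u i) (star (u i)) := fun _ => rfl
  simp only [hρ]
  refine ⟨fun i => ⟨?_, ?_⟩, fun i j => ?_⟩
  · exact (posSemidef_one_add_smul_vecMulVec ht.le _).smul (by positivity)
  · rw [trace_smul, trace_one_add_smul_vecMulVec (hu' i), Fintype.card_fin, Complex.real_smul]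
    push_cast
    exact inv_mul_cancel₀ (by norm_cast; positivity)
  · rw [smul_comm, ← smul_sub]
    exact (posSemidef_smul_one_add_smul_vecMulVec_sub (hu' i) (hu' j) hE ht.le (hdet i j)).smul
      (by positivity)

/-- with `d+1` unit vectors `u_i ∈ ℂ^d` of pairwise `|⟨u_i,u_j⟩| = c`, where
`c ∈ [1/d, 1)`, the tuple `ρ_i = (1/(d+t))(I_d + t|u_i⟩⟨u_i|)` is CQ `ε`-DP whenever
`0 < t ≤ 2(e^ε−1)/(√D+1−e^ε)`, where `D = (e^ε−1)² + 4(1−c²)e^ε`. -/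
theorem statement15 (d : ℕ) (hd : 2 ≤ d) (c ε t : ℝ)
    (hc0 : 1 / (d : ℝ) ≤ c) (hc1 : c < 1) (hε : 0 < ε) (ht : 0 < t)
    (u : Fin (d + 1) → Fin d → ℂ)
    (hu : ∀ i, ∑ k, ‖u i k‖ ^ 2 = 1)
    (huv : ∀ i j, i ≠ j → ‖∑ k, starRingEnd ℂ (u i k) * u j k‖ = c)
    (D : ℝ) (hD : D = (Real.exp ε - 1) ^ 2 + 4 * (1 - c ^ 2) * Real.exp ε)
    (htmax : t ≤ 2 * (Real.exp ε - 1) / (Real.sqrt D + 1 - Real.exp ε)) :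
    IsCQDP ε (fun i => ((d : ℝ) + t)⁻¹ •
      ((1 : Matrix (Fin d) (Fin d) ℂ) +
        t • Matrix.of fun a b => u i a * starRingEnd ℂ (u i b))) :=
  statement15_general d c ε t hc1 hε ht u hu huv D hD htmax

end
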